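/- arXiv:1606.04868 — 2 statements merged into one kernel-verified Lean document; each statement's English description precedes it below -/
import Mathlib

section
/- The monomials φ_n(x) = x^n, n ∈ ℕ₀, in L²(0,1) have Gramian equal to the Hilbert matrix G_{nm} = 1/(n+m+1), and satisfy the upper frame (Bessel) bound Σ_{n=0}^∞ |∫₀¹ f(x) x^n dx|² ≤ π ∫₀¹ |f(x)|² dx for all f ∈ L²(0,1). -/
/-!
Write `c n = ∫₀¹ f xⁿ` and `P = ∑_{n<N} c n xⁿ`. Then `∫ f P = ∑ c n²`, while by the Gram
identity `∫ P² = ∑ c n c m / (n + m + 1)`, which Hilbert's inequality bounds by `π ∑ c n²`.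
Integrating `2π f P ≤ π² f² + P²` then bounds every partial sum of `∑ c n²` by `π ∫ f²`.

Hilbert's inequality is Schur's test with weights `(m + 1/2)^(-1/2)`: the weighted row sums
`∑ₘ 1 / ((c + m + 1/2) √(m + 1/2))`, `c = n + 1/2`, are dominated by
`∫₀^∞ dt / ((c + t) √t) = π / √c`, a primitive of the integrand being `(2/√c) arctan √(t/c)`.
-/

open MeasureTheory Finset Real

noncomputable def hilbertPrimitive (c s : ℝ) : ℝ := 2 / √c * arctan (√s / √c)

section HilbertPrimitive

variable {c : ℝ}

lemma continuous_hilbertPrimitive : Continuous (hilbertPrimitive c) := by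
  unfold hilbertPrimitive; fun_prop

lemma hasDerivAt_hilbertPrimitive (hc : 0 < c) {t : ℝ} (ht : 0 < t) :
    HasDerivAt (hilbertPrimitive c) ((c + t) * √t)⁻¹ t := by
  have hsc : 0 < √c := sqrt_pos.2 hc
  have hst : 0 < √t := sqrt_pos.2 ht
  have h := (((hasDerivAt_sqrt ht.ne').div_const √c).arctan).const_mul (2 / √c)
  refine h.congr_deriv ?_
  rw [div_pow, sq_sqrt hc.le, sq_sqrt ht.le]
  field_simp
  rw [sq_sqrt hc.le]

lemma hilbertPrimitive_le (s : ℝ) : hilbertPrimitive c s ≤ π / √c :=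
  calc hilbertPrimitive c s ≤ 2 / √c * (π / 2) :=
        mul_le_mul_of_nonneg_left (arctan_lt_pi_div_two _).le (by positivity)
    _ = π / √c := by ring

lemma div_one_add_sq_le_arctan {u : ℝ} (hu : 0 ≤ u) : u / (1 + u ^ 2) ≤ arctan u := by
  have h := (convex_Icc 0 u).mul_sub_le_image_sub_of_le_deriv continuous_arctan.continuousOn
    differentiable_arctan.differentiableOn (C := 1 / (1 + u ^ 2)) (fun x hx => by
      rw [interior_Icc] at hx
      simp only [Real.deriv_arctan]
      gcongr
      exacts [hx.1.le, hx.2.le]) 0 ⟨le_rfl, hu⟩ u ⟨hu, le_rfl⟩ hu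
  simpa [div_eq_inv_mul] using h

lemma two_mul_sqrt_div_le_hilbertPrimitive (hc : 0 < c) {s : ℝ} (hs : 0 ≤ s) :
    2 * √s / (c + s) ≤ hilbertPrimitive c s := by
  have hsc : 0 < √c := sqrt_pos.2 hc
  have h := mul_le_mul_of_nonneg_left (div_one_add_sq_le_arctan (u := √s / √c) (by positivity))
    (by positivity : 0 ≤ 2 / √c)
  refine le_of_eq_of_le ?_ h
  field_simp
  rw [sq_sqrt hc.le, sq_sqrt hs]

lemma inv_mul_sqrt_le_hilbertPrimitive_sub (hc : 0 < c) {a : ℝ} (ha : 0 < a) :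
    ((c + (a + 1)) * √(a + 1))⁻¹ ≤ hilbertPrimitive c (a + 1) - hilbertPrimitive c a := by
  have h := (convex_Icc a (a + 1)).mul_sub_le_image_sub_of_le_deriv
    continuous_hilbertPrimitive.continuousOn
    (fun x hx => by
      rw [interior_Icc] at hx
      exact (hasDerivAt_hilbertPrimitive hc (ha.trans hx.1)).differentiableAt.differentiableWithinAt)
    (C := ((c + (a + 1)) * √(a + 1))⁻¹) (fun x hx => by
      rw [interior_Icc] at hx
      have hx0 := ha.trans hx.1
      rw [(hasDerivAt_hilbertPrimitive hc hx0).deriv]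
      exact inv_anti₀ (by positivity) (by gcongr <;> exact hx.2.le))
    a ⟨le_rfl, by linarith⟩ (a + 1) ⟨by linarith, le_rfl⟩ (by linarith)
  simpa using h

lemma sum_range_inv_mul_sqrt_le (hc : 0 < c) (N : ℕ) :
    ∑ m ∈ range N, ((c + (m + 1 / 2)) * √(m + 1 / 2))⁻¹ ≤ π / √c := by
  suffices h : ∀ n : ℕ, ∑ m ∈ range (n + 1), ((c + (m + 1 / 2)) * √(m + 1 / 2))⁻¹
      ≤ hilbertPrimitive c (n + 1 / 2) by
    cases N with
    | zero => simp only [range_zero, sum_empty]; positivity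
    | succ n => exact (h n).trans (hilbertPrimitive_le _)
  intro n
  induction n with
  | zero =>
    -- no unit interval `[m - 1/2, m + 1/2] ⊆ [0, ∞)` is available for the first term
    have h := two_mul_sqrt_div_le_hilbertPrimitive hc (s := 1 / 2) (by norm_num)
    simp only [zero_add, range_one, sum_singleton, Nat.cast_zero]
    refine le_of_eq_of_le ?_ h
    have hsq : √(1 / 2 : ℝ) ^ 2 = 1 / 2 := sq_sqrt (by norm_num)
    field_simp
    rw [hsq]
    ring
  | succ n ih =>
    rw [sum_range_succ]
    have h := inv_mul_sqrt_le_hilbertPrimitive_sub hc (a := n + 1 / 2) (by positivity)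
    push_cast
    rw [show (n : ℝ) + 1 + 1 / 2 = n + 1 / 2 + 1 by ring]
    linarith

end HilbertPrimitive

theorem schur_test {ι : Type*} (s : Finset ι) {K : ι → ι → ℝ} (hK : ∀ i j, K i j = K j i)
    (hK₀ : ∀ i j, 0 ≤ K i j) {p : ι → ℝ} (hp : ∀ i, 0 < p i) {C : ℝ}
    (hC : ∀ i ∈ s, ∑ j ∈ s, K i j * p j ≤ C * p i) (a : ι → ℝ) :
    ∑ i ∈ s, ∑ j ∈ s, K i j * a i * a j ≤ C * ∑ i ∈ s, a i ^ 2 := by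
  set Q : ι → ι → ℝ := fun i j => K i j * a i ^ 2 * p j / p i
  have amgm : ∀ i j, K i j * a i * a j ≤ (Q i j + Q j i) / 2 := by
    intro i j
    have hpi := hp i
    have hpj := hp j
    have hgap : a i ^ 2 * (p j / p i) + a j ^ 2 * (p i / p j) - 2 * (a i * a j)
        = (a i * p j - a j * p i) ^ 2 / (p i * p j) := by
      field_simp
      ring
    have hle : 2 * (a i * a j) ≤ a i ^ 2 * (p j / p i) + a j ^ 2 * (p i / p j) := by
      have := div_nonneg (sq_nonneg (a i * p j - a j * p i)) (mul_pos hpi hpj).le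
      linarith
    calc K i j * a i * a j = K i j * (2 * (a i * a j)) / 2 := by ring
      _ ≤ K i j * (a i ^ 2 * (p j / p i) + a j ^ 2 * (p i / p j)) / 2 := by
        gcongr
        exact hK₀ i j
      _ = (Q i j + Q j i) / 2 := by
        simp only [Q, hK j i]
        ring
  calc ∑ i ∈ s, ∑ j ∈ s, K i j * a i * a j
      ≤ ∑ i ∈ s, ∑ j ∈ s, (Q i j + Q j i) / 2 := by gcongr with i _ j _; exact amgm i j
    _ = ∑ i ∈ s, ∑ j ∈ s, Q i j := by
      simp only [← sum_div, sum_add_distrib]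
      rw [sum_comm (f := fun i j => Q j i)]
      ring
    _ = ∑ i ∈ s, a i ^ 2 / p i * ∑ j ∈ s, K i j * p j := by
      simp only [Q, mul_sum]
      refine sum_congr rfl fun i _ => sum_congr rfl fun j _ => ?_
      ring
    _ ≤ ∑ i ∈ s, a i ^ 2 / p i * (C * p i) := by
      gcongr with i hi
      · exact div_nonneg (sq_nonneg _) (hp i).le
      · exact hC i hi
    _ = C * ∑ i ∈ s, a i ^ 2 := by
      rw [mul_sum]
      refine sum_congr rfl fun i _ => ?_
      field_simp [(hp i).ne']

theorem hilbert_inequality (a : ℕ → ℝ) (N : ℕ) :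
    ∑ n ∈ range N, ∑ m ∈ range N, a n * a m / (n + m + 1) ≤ π * ∑ n ∈ range N, a n ^ 2 := by
  have h := schur_test (range N) (K := fun n m : ℕ => ((n : ℝ) + m + 1)⁻¹)
    (fun n m => by ring_nf) (fun n m => by positivity)
    (p := fun m => (√(m + 1 / 2))⁻¹) (fun m => by positivity) (C := π) (fun n _ => by
      have hrow := sum_range_inv_mul_sqrt_le (c := n + 1 / 2) (by positivity) N
      refine le_of_eq_of_le ?_ (hrow.trans_eq (div_eq_mul_inv _ _))
      refine sum_congr rfl fun m _ => ?_
      rw [mul_inv]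
      ring_nf) a
  refine le_of_eq_of_le ?_ h
  refine sum_congr rfl fun n _ => sum_congr rfl fun m _ => ?_
  ring

lemma integral_Ioo_pow_add (n m : ℕ) :
    ∫ x in Set.Ioo (0 : ℝ) 1, x ^ (n + m) = 1 / ((n : ℝ) + m + 1) := by
  rw [← integral_Ioc_eq_integral_Ioo, ← intervalIntegral.integral_of_le zero_le_one, integral_pow]
  push_cast
  ring

lemma integrableOn_Ioo_pow (k : ℕ) : IntegrableOn (fun x : ℝ => x ^ k) (Set.Ioo 0 1) :=
  (continuous_pow k).integrableOn_Icc.mono_set Set.Ioo_subset_Icc_self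

lemma integral_Ioo_sq_sum_pow (a : ℕ → ℝ) (N : ℕ) :
    ∫ x in Set.Ioo (0 : ℝ) 1, (∑ n ∈ range N, a n * x ^ n) ^ 2
      = ∑ n ∈ range N, ∑ m ∈ range N, a n * a m / (n + m + 1) := by
  have hint : ∀ n m, IntegrableOn (fun x : ℝ => a n * a m * x ^ (n + m)) (Set.Ioo 0 1) :=
    fun n m => (integrableOn_Ioo_pow (n + m)).const_mul _
  simp_rw [sq, sum_mul_sum, mul_mul_mul_comm _ _ (a _), ← pow_add]
  rw [integral_finsetSum _ fun n _ => integrable_finsetSum _ fun m _ => hint n m]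
  refine sum_congr rfl fun n _ => ?_
  rw [integral_finsetSum _ fun m _ => hint n m]
  refine sum_congr rfl fun m _ => ?_
  rw [integral_const_mul, integral_Ioo_pow_add, mul_one_div]

lemma integral_mul_le_of_integral_sq_le {α : Type*} [MeasurableSpace α] {μ : Measure α}
    {f g : α → ℝ} (hf : Integrable (fun x => f x ^ 2) μ) (hg : Integrable (fun x => g x ^ 2) μ)
    (hfg : Integrable (fun x => f x * g x) μ) {C : ℝ} (hC : 0 < C)
    (h : ∫ x, g x ^ 2 ∂μ ≤ C * ∫ x, f x * g x ∂μ) :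
    ∫ x, f x * g x ∂μ ≤ C * ∫ x, f x ^ 2 ∂μ := by
  have hmono : ∫ x, 2 * C * (f x * g x) ∂μ ≤ ∫ x, C ^ 2 * f x ^ 2 + g x ^ 2 ∂μ :=
    integral_mono (hfg.const_mul _) ((hf.const_mul _).add hg) fun x => by
      nlinarith [two_mul_le_add_sq (C * f x) (g x)]
  rw [integral_const_mul, integral_add (hf.const_mul _) hg, integral_const_mul] at hmono
  nlinarith

lemma sum_range_sq_integral_mul_pow_le {f : ℝ → ℝ}
    (hf : MemLp f 2 (volume.restrict (Set.Ioo 0 1))) (N : ℕ) :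
    ∑ n ∈ range N, (∫ x in Set.Ioo (0 : ℝ) 1, f x * x ^ n) ^ 2
      ≤ π * ∫ x in Set.Ioo (0 : ℝ) 1, f x ^ 2 := by
  set c : ℕ → ℝ := fun n => ∫ x in Set.Ioo (0 : ℝ) 1, f x * x ^ n
  set P : ℝ → ℝ := fun x => ∑ n ∈ range N, c n * x ^ n
  have hfpow : ∀ n, IntegrableOn (fun x => c n * (f x * x ^ n)) (Set.Ioo 0 1) := by
    intro n
    refine ((hf.integrable one_le_two).mul_bdd (c := 1) (by fun_prop) ?_).const_mul _
    filter_upwards [ae_restrict_mem measurableSet_Ioo] with x hx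
    rw [norm_pow, norm_of_nonneg hx.1.le]
    exact pow_le_one₀ hx.1.le hx.2.le
  have hfP_eq : ∀ x, f x * P x = ∑ n ∈ range N, c n * (f x * x ^ n) := fun x => by
    simp only [P, mul_sum]
    exact sum_congr rfl fun n _ => by ring
  have hfP : ∫ x in Set.Ioo (0 : ℝ) 1, f x * P x = ∑ n ∈ range N, c n ^ 2 := by
    simp only [hfP_eq]
    rw [integral_finsetSum _ fun n _ => hfpow n]
    exact sum_congr rfl fun n _ => by rw [integral_const_mul, sq]
  have hPP : ∫ x in Set.Ioo (0 : ℝ) 1, P x ^ 2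
      = ∑ n ∈ range N, ∑ m ∈ range N, c n * c m / (n + m + 1) :=
    integral_Ioo_sq_sum_pow c N
  rw [← hfP]
  refine integral_mul_le_of_integral_sq_le hf.integrable_sq ?_ ?_ pi_pos ?_
  · have hPc : Continuous fun x => P x ^ 2 := by simp only [P]; fun_prop
    exact hPc.integrableOn_Icc.mono_set Set.Ioo_subset_Icc_self
  · simp only [hfP_eq]; exact integrable_finsetSum _ fun n _ => hfpow n
  · rw [hPP, hfP]; exact hilbert_inequality c N

/-- the monomials x^n in L²(0,1) have Gramian the Hilbert matrix
1/(n+m+1), and satisfy the Bessel bound with constant π (Hilbert's inequality). -/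
theorem monomials_hilbert_matrix_and_bessel :
    (∀ n m : ℕ,
      ∫ x in Set.Ioo (0:ℝ) 1, x ^ (n + m) = 1 / ((n : ℝ) + (m : ℝ) + 1)) ∧
    (∀ f : ℝ → ℝ, MemLp f 2 (volume.restrict (Set.Ioo (0:ℝ) 1)) →
      ∑' n : ℕ, (∫ x in Set.Ioo (0:ℝ) 1, f x * x ^ n) ^ 2
        ≤ Real.pi * ∫ x in Set.Ioo (0:ℝ) 1, (f x) ^ 2) :=
  ⟨integral_Ioo_pow_add, fun _ hf =>
    Real.tsum_le_of_sum_range_le (fun _ => sq_nonneg _) (sum_range_sq_integral_mul_pow_le hf)⟩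
end

section
/- The monomials {x^n}_{n∈ℕ₀} do not form a frame in L²(0,1): there is no constant B₁ > 0 such that B₁‖f‖² ≤ Σ_{n=0}^∞ |∫₀¹ f(x)x^n dx|² for all f ∈ L²(0,1). -/
/-!
Test the frame inequality on `f = 𝟙_(0, ε)`. Its energy is `ε`, while its moments are
`ε ^ (n + 1) / (n + 1)`, so the sum of their squares is dominated by the geometric series
`ε² / (1 - ε²)`. A lower frame bound `B` would thus satisfy `B ≤ ε / (1 - ε²)` for every small
`ε > 0`, which is absurd.
-/

open MeasureTheory Set

lemma setIntegral_Ioo_indicator_one_mul {a b c : ℝ} (hcb : c ≤ b) (g : ℝ → ℝ) :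
    ∫ x in Ioo a b, (Ioo a c).indicator 1 x * g x = ∫ x in Ioo a c, g x := by
  have hind : ∀ x, (Ioo a c).indicator 1 x * g x = (Ioo a c).indicator g x := fun x => by
    by_cases hx : x ∈ Ioo a c <;> simp [hx]
  simp_rw [hind]
  rw [setIntegral_indicator measurableSet_Ioo, Ioo_inter_Ioo, max_self, min_eq_right hcb]

lemma setIntegral_Ioo_indicator_one_sq {a b c : ℝ} (hac : a ≤ c) (hcb : c ≤ b) :
    ∫ x in Ioo a b, (Ioo a c).indicator (1 : ℝ → ℝ) x ^ 2 = c - a := by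
  simp_rw [sq]
  rw [setIntegral_Ioo_indicator_one_mul hcb, setIntegral_indicator measurableSet_Ioo, inter_self]
  simp [hac]

lemma setIntegral_Ioo_zero_pow {c : ℝ} (hc : 0 ≤ c) (n : ℕ) :
    ∫ x in Ioo 0 c, x ^ n = c ^ (n + 1) / (n + 1) := by
  rw [← integral_Ioc_eq_integral_Ioo, ← intervalIntegral.integral_of_le hc, integral_pow]
  simp

lemma tsum_sq_pow_succ_div_succ_le {ε : ℝ} (h0 : 0 ≤ ε) (h1 : ε < 1) :
    ∑' n : ℕ, (ε ^ (n + 1) / (n + 1)) ^ 2 ≤ ε ^ 2 / (1 - ε ^ 2) := by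
  have hε2 : ε ^ 2 < 1 := by nlinarith
  have hle : ∀ n : ℕ, (ε ^ (n + 1) / (n + 1)) ^ 2 ≤ ε ^ 2 * (ε ^ 2) ^ n := fun n => by
    calc (ε ^ (n + 1) / (n + 1)) ^ 2 ≤ (ε ^ (n + 1)) ^ 2 := by
          rw [div_pow]
          exact div_le_self (by positivity) (one_le_pow₀ (by linarith [n.cast_nonneg (α := ℝ)]))
      _ = ε ^ 2 * (ε ^ 2) ^ n := by ring
  have hgeom : Summable fun n : ℕ => ε ^ 2 * (ε ^ 2) ^ n :=
    (summable_geometric_of_lt_one (by positivity) hε2).mul_left _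
  calc ∑' n : ℕ, (ε ^ (n + 1) / (n + 1)) ^ 2
      ≤ ∑' n : ℕ, ε ^ 2 * (ε ^ 2) ^ n :=
        (hgeom.of_nonneg_of_le (fun n => by positivity) hle).tsum_le_tsum hle hgeom
    _ = ε ^ 2 / (1 - ε ^ 2) := by
        rw [tsum_mul_left, tsum_geometric_of_lt_one (by positivity) hε2, div_eq_mul_inv]

/-- the monomials {x^n} are not a frame in L²(0,1): there is no
positive lower frame bound. -/
theorem monomials_no_lower_frame_bound :
    ¬ ∃ B₁ : ℝ, 0 < B₁ ∧
      ∀ f : ℝ → ℝ, MemLp f 2 (volume.restrict (Set.Ioo (0:ℝ) 1)) →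
        B₁ * ∫ x in Set.Ioo (0:ℝ) 1, (f x) ^ 2
          ≤ ∑' n : ℕ, (∫ x in Set.Ioo (0:ℝ) 1, f x * x ^ n) ^ 2 := by
  rintro ⟨B, hB, hframe⟩
  set ε : ℝ := min (B / 2) (1 / 2)
  have hε0 : 0 < ε := lt_min (by linarith) (by norm_num)
  have hεB : ε ≤ B / 2 := min_le_left _ _
  have hε_half : ε ≤ 1 / 2 := min_le_right _ _
  have hmem : MemLp ((Ioo 0 ε).indicator 1) 2 (volume.restrict (Ioo (0 : ℝ) 1)) :=
    memLp_indicator_const 2 measurableSet_Ioo (1 : ℝ) (Or.inr measure_Ioo_lt_top.ne)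
  have hbound := hframe _ hmem
  have hε_le_one : ε ≤ 1 := by linarith
  simp only [setIntegral_Ioo_indicator_one_sq hε0.le hε_le_one, sub_zero,
    setIntegral_Ioo_indicator_one_mul hε_le_one,
    setIntegral_Ioo_zero_pow hε0.le] at hbound
  have hε2 : 0 < 1 - ε ^ 2 := by nlinarith
  have hcleared := (le_div_iff₀ hε2).1
    (hbound.trans (tsum_sq_pow_succ_div_succ_le hε0.le (by linarith)))
  have hB_mul_le : B * (1 - ε ^ 2) ≤ ε := le_of_mul_le_mul_left (by linarith) hε0
  nlinarith [mul_le_mul_of_nonneg_left (by nlinarith : ε ^ 2 ≤ 1 / 4) hB.le]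
end
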